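/- arXiv:2106.15722 — 9 statements merged into one kernel-verified Lean document; each statement's English description precedes it below -/
import Mathlib

section
/- Let a and b be coprime integers and let p be a prime. Then p divides the discriminant Δ of E_{C5}(a,b) and p does not divide the invariant c₄ of E_{C5}(a,b) if and only if p divides a·b, or (p ≥ 7 and p divides a² + 11ab − b²). -/
/-- The parameterized Weierstrass curve `E_{C5}(a,b)`. -/
def EC5 (a b : ℤ) : WeierstrassCurve ℤ :=
  ⟨a - b, -(a * b), -(a ^ 2 * b), 0, 0⟩

lemma dec2 : ∀ A B : ZMod 2, A ≠ 0 → B ≠ 0 → ¬(A ^ 2 + 11 * A * B - B ^ 2 = 0) := by decide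

lemma dec3 : ∀ A B : ZMod 3, A ≠ 0 → B ≠ 0 → ¬(A ^ 2 + 11 * A * B - B ^ 2 = 0) := by decide

lemma dec5 : ∀ A B : ZMod 5, A ^ 2 + 11 * A * B - B ^ 2 = 0 →
    A ^ 4 + 12 * A ^ 3 * B + 14 * A ^ 2 * B ^ 2 - 12 * A * B ^ 3 + B ^ 4 = 0 := by decide

lemma key_zmod (p : ℕ) (hp : p.Prime) (A B : ZMod p) (hnb : ¬(A = 0 ∧ B = 0)) :
    ((-(A * B) ^ 5 * (A ^ 2 + 11 * A * B - B ^ 2) = 0 ∧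
      ¬ A ^ 4 + 12 * A ^ 3 * B + 14 * A ^ 2 * B ^ 2 - 12 * A * B ^ 3 + B ^ 4 = 0) ↔
      (A * B = 0 ∨ (7 ≤ p ∧ A ^ 2 + 11 * A * B - B ^ 2 = 0))) := by
  haveI : Fact p.Prime := ⟨hp⟩
  constructor
  · rintro ⟨hD, hC⟩
    have hcases : A * B = 0 ∨ A ^ 2 + 11 * A * B - B ^ 2 = 0 := by
      rcases mul_eq_zero.mp hD with h | h
      · exact Or.inl ((pow_eq_zero_iff (by norm_num)).mp (neg_eq_zero.mp h))
      · exact Or.inr h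
    by_cases hAB : A * B = 0
    · exact Or.inl hAB
    have hQ : A ^ 2 + 11 * A * B - B ^ 2 = 0 := hcases.resolve_left hAB
    right
    refine ⟨?_, hQ⟩
    by_contra h7
    push_neg at h7
    have h2 := hp.two_le
    obtain ⟨hA0, hB0⟩ := mul_ne_zero_iff.mp hAB
    interval_cases p
    · exact dec2 A B hA0 hB0 hQ
    · exact dec3 A B hA0 hB0 hQ
    · norm_num at hp
    · exact hC (dec5 A B hQ)
    · norm_num at hp
  · rintro (hA | ⟨h7, hQ⟩)
    · refine ⟨by rw [hA]; ring, ?_⟩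
      intro hC
      rcases mul_eq_zero.mp hA with h0 | h0
      · have h4 : B ^ 4 = 0 := by rw [h0] at hC; linear_combination hC
        exact hnb ⟨h0, (pow_eq_zero_iff (by norm_num)).mp h4⟩
      · have h4 : A ^ 4 = 0 := by rw [h0] at hC; linear_combination hC
        exact hnb ⟨(pow_eq_zero_iff (by norm_num)).mp h4, h0⟩
    · refine ⟨by rw [hQ, mul_zero], ?_⟩
      intro hC
      have h5 : (5 : ZMod p) ≠ 0 := by
        intro h
        have h' : ((5 : ℕ) : ZMod p) = 0 := by exact_mod_cast h
        have := Nat.le_of_dvd (by norm_num) ((ZMod.natCast_eq_zero_iff 5 p).mp h')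
        omega
      have key5 : (5 : ZMod p) * B ^ 3 * (B - 11 * A) = 0 := by
        linear_combination hC - (A ^ 2 + A * B + 4 * B ^ 2) * hQ
      rcases mul_eq_zero.mp key5 with h1 | h2
      · rcases mul_eq_zero.mp h1 with h5' | hB3
        · exact h5 h5'
        · have hB0 : B = 0 := (pow_eq_zero_iff (by norm_num)).mp hB3
          have hA2 : A ^ 2 = 0 := by rw [hB0] at hQ; linear_combination hQ
          exact hnb ⟨(pow_eq_zero_iff (by norm_num)).mp hA2, hB0⟩
      · have hA2 : A ^ 2 = 0 := by linear_combination hQ + B * h2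
        have hA0 : A = 0 := (pow_eq_zero_iff (by norm_num)).mp hA2
        have hB0 : B = 0 := by linear_combination h2 + 11 * hA0
        exact hnb ⟨hA0, hB0⟩

theorem stmt_0 (a b : ℤ) (hab : IsCoprime a b) (p : ℕ) (hp : p.Prime) :
    ((p : ℤ) ∣ (EC5 a b).Δ ∧ ¬ (p : ℤ) ∣ (EC5 a b).c₄) ↔
      ((p : ℤ) ∣ a * b ∨ (7 ≤ p ∧ (p : ℤ) ∣ a ^ 2 + 11 * a * b - b ^ 2)) := by
  haveI : Fact p.Prime := ⟨hp⟩
  have hΔ : (EC5 a b).Δ = -(a * b) ^ 5 * (a ^ 2 + 11 * a * b - b ^ 2) := by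
    simp only [EC5, WeierstrassCurve.Δ, WeierstrassCurve.b₂, WeierstrassCurve.b₄,
      WeierstrassCurve.b₆, WeierstrassCurve.b₈]
    ring
  have hc : (EC5 a b).c₄ = a ^ 4 + 12 * a ^ 3 * b + 14 * a ^ 2 * b ^ 2 - 12 * a * b ^ 3 + b ^ 4 := by
    simp only [EC5, WeierstrassCurve.c₄, WeierstrassCurve.b₂, WeierstrassCurve.b₄]
    ring
  have hnb : ¬((a : ZMod p) = 0 ∧ (b : ZMod p) = 0) := by
    rintro ⟨h1, h2⟩
    obtain ⟨u, v, huv⟩ := hab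
    have h := congrArg (fun n : ℤ => (n : ZMod p)) huv
    push_cast at h
    rw [h1, h2] at h
    simp at h
  have cast_dvd : ∀ n : ℤ, (p : ℤ) ∣ n ↔ (n : ZMod p) = 0 := fun n =>
    (ZMod.intCast_zmod_eq_zero_iff_dvd n p).symm
  rw [hΔ, hc]; simp only [cast_dvd]
  have := key_zmod p hp (a : ZMod p) (b : ZMod p) hnb
  push_cast
  exact this
end

section
/- Let a and b be coprime integers and let p be a prime. Then p divides the discriminant Δ of E_{C7}(a,b) and p does not divide the invariant c₄ of E_{C7}(a,b) if and only if p divides a·b·(a−b), or (p ≥ 13 and p divides a³ + 5a²b − 8ab² + b³). -/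
/-- The parameterized Weierstrass curve `E_{C7}(a,b)`. -/
def EC7 (a b : ℤ) : WeierstrassCurve ℤ :=
  ⟨a ^ 2 + a * b - b ^ 2, a ^ 2 * b ^ 2 - a * b ^ 3, a ^ 4 * b ^ 2 - a ^ 3 * b ^ 3, 0, 0⟩

private lemma key_small (p : ℕ) (hp : p.Prime) (hlt : p < 13) :
    ∀ A B : ZMod p, A^3+5*A^2*B-8*A*B^2+B^3 = 0 →
      A*B*(A-B) = 0 ∨
      A^8+4*A^7*B-14*A^6*B^2+35*A^4*B^4-56*A^3*B^5+42*A^2*B^6-12*A*B^7+B^8 = 0 := by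
  have h2 := hp.two_le
  interval_cases p <;> first
    | exact absurd hp (by decide)
    | decide

theorem stmt_1 (a b : ℤ) (hab : IsCoprime a b) (p : ℕ) (hp : p.Prime) :
    ((p : ℤ) ∣ (EC7 a b).Δ ∧ ¬ (p : ℤ) ∣ (EC7 a b).c₄) ↔
      ((p : ℤ) ∣ a * b * (a - b) ∨
        (13 ≤ p ∧ (p : ℤ) ∣ a ^ 3 + 5 * a ^ 2 * b - 8 * a * b ^ 2 + b ^ 3)) := by
  haveI : Fact p.Prime := ⟨hp⟩
  have hp' : Prime (p : ℤ) := Nat.prime_iff_prime_int.mp hp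
  have hΔ : (EC7 a b).Δ = -(a*b*(a-b))^7 * (a^3+5*a^2*b-8*a*b^2+b^3) := by
    simp only [EC7, WeierstrassCurve.Δ, WeierstrassCurve.b₂, WeierstrassCurve.b₄,
      WeierstrassCurve.b₆, WeierstrassCurve.b₈]; ring
  have hc4 : (EC7 a b).c₄
      = a^8+4*a^7*b-14*a^6*b^2+35*a^4*b^4-56*a^3*b^5+42*a^2*b^6-12*a*b^7+b^8 := by
    simp only [EC7, WeierstrassCurve.c₄, WeierstrassCurve.b₂, WeierstrassCurve.b₄]; ring
  set A : ZMod p := (a : ZMod p) with hA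
  set B : ZMod p := (b : ZMod p) with hB
  have hcop : ¬ (A = 0 ∧ B = 0) := by
    rintro ⟨ha0, hb0⟩
    obtain ⟨u, v, huv⟩ := hab
    have := congrArg (fun x : ℤ => (x : ZMod p)) huv
    push_cast at this
    rw [← hA, ← hB, ha0, hb0] at this
    simp at this
  have hgcast : (p : ℤ) ∣ a ^ 3 + 5 * a ^ 2 * b - 8 * a * b ^ 2 + b ^ 3 ↔
      A^3+5*A^2*B-8*A*B^2+B^3 = 0 := by
    rw [← ZMod.intCast_zmod_eq_zero_iff_dvd]; push_cast; rfl
  have hc4cast : (p : ℤ) ∣ (EC7 a b).c₄ ↔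
      A^8+4*A^7*B-14*A^6*B^2+35*A^4*B^4-56*A^3*B^5+42*A^2*B^6-12*A*B^7+B^8 = 0 := by
    rw [hc4, ← ZMod.intCast_zmod_eq_zero_iff_dvd]; push_cast; rfl
  have habcast : (p : ℤ) ∣ a * b * (a - b) ↔ A * B * (A - B) = 0 := by
    rw [← ZMod.intCast_zmod_eq_zero_iff_dvd]; push_cast; rfl
  constructor
  · rintro ⟨hΔd, hc4d⟩
    rw [hΔ] at hΔd
    rcases hp'.dvd_mul.mp hΔd with h | hg
    · left
      exact hp'.dvd_of_dvd_pow (by rwa [dvd_neg] at h)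
    · by_cases h13 : 13 ≤ p
      · exact Or.inr ⟨h13, hg⟩
      · left
        rw [habcast]
        rcases key_small p hp (by omega) A B (hgcast.mp hg) with h | h
        · exact h
        · exact absurd (hc4cast.mpr h) hc4d
  · rintro (h | ⟨h13, hg⟩)
    · constructor
      · rw [hΔ]
        exact h.trans ⟨-(a*b*(a-b))^6 * (a^3+5*a^2*b-8*a*b^2+b^3), by ring⟩
      · intro hc
        have hC4 := hc4cast.mp hc
        have hprod := habcast.mp h
        rcases mul_eq_zero.mp hprod with h' | hAB
        · rcases mul_eq_zero.mp h' with ha0 | hb0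
          · have hb8 : B ^ 8 = 0 := by rw [ha0] at hC4; linear_combination hC4
            exact hcop ⟨ha0, pow_eq_zero_iff (by norm_num) |>.mp hb8⟩
          · have ha8 : A ^ 8 = 0 := by rw [hb0] at hC4; linear_combination hC4
            exact hcop ⟨pow_eq_zero_iff (by norm_num) |>.mp ha8, hb0⟩
        · have hAeB : A = B := sub_eq_zero.mp hAB
          rw [hAeB] at hC4
          have hb8 : B ^ 8 = 0 := by linear_combination hC4
          have hb0 : B = 0 := pow_eq_zero_iff (by norm_num) |>.mp hb8
          exact hcop ⟨hAeB.trans hb0, hb0⟩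
    · have hG := hgcast.mp hg
      constructor
      · rw [hΔ]
        exact hg.trans ⟨-(a*b*(a-b))^7, by ring⟩
      · intro hc
        have hC4 := hc4cast.mp hc
        -- b is not divisible by p
        have hBne : B ≠ 0 := by
          intro hb0
          have ha3 : A ^ 3 = 0 := by rw [hb0] at hG; linear_combination hG
          exact hcop ⟨pow_eq_zero_iff (by norm_num) |>.mp ha3, hb0⟩
        -- Bezout identity: resultant 49
        have h49 : (49 : ZMod p) * B ^ 10 = 0 := by
          linear_combination (-444*A^2 - 2117*A*B + 4271*B^2) * hC4 +
            (444*A^7 + 1673*A^6*B - 6832*A^5*B^2 + 378*A^4*B^3 + 17115*A^3*B^4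
              - 26488*A^2*B^5 + 19593*A*B^6 - 4222*B^7) * hG
        have h49' : (49 : ZMod p) = 0 := by
          rcases mul_eq_zero.mp h49 with h' | h'
          · exact h'
          · exact absurd (pow_eq_zero_iff (by norm_num) |>.mp h') hBne
        have : p ∣ 49 := by
          have := (ZMod.natCast_eq_zero_iff 49 p).mp (by exact_mod_cast h49')
          exact this
        have : p ∣ 7 := hp.dvd_of_dvd_pow (n := 2) (by norm_num [show (49:ℕ) = 7^2 by norm_num] at this ⊢; exact this)
        have := Nat.le_of_dvd (by norm_num) this
        omega
end

section
/- Let a and b be coprime integers. Then a³ + 5a²b − 8ab² + b³ is divisible by none of 2, 3, 5, and 11. -/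
lemma keylem (p : ℕ) [NeZero p] (hp : 1 < p) (hdec : ∀ x y : ZMod p, x = 0 ∧ y = 0 ∨ x^3 + 5*x^2*y - 8*x*y^2 + y^3 ≠ 0)
    (a b : ℤ) (hab : IsCoprime a b) :
    ¬ (p : ℤ) ∣ a ^ 3 + 5 * a ^ 2 * b - 8 * a * b ^ 2 + b ^ 3 := by
  intro h
  have h0 : ((a ^ 3 + 5 * a ^ 2 * b - 8 * a * b ^ 2 + b ^ 3 : ℤ) : ZMod p) = 0 :=
    (ZMod.intCast_zmod_eq_zero_iff_dvd _ p).mpr h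
  push_cast at h0
  rcases hdec (a : ZMod p) (b : ZMod p) with ⟨ha, hb⟩ | hne
  · have hpa : (p : ℤ) ∣ a := (ZMod.intCast_zmod_eq_zero_iff_dvd _ p).mp ha
    have hpb : (p : ℤ) ∣ b := (ZMod.intCast_zmod_eq_zero_iff_dvd _ p).mp hb
    obtain ⟨u, v, huv⟩ := hab
    have : (p : ℤ) ∣ 1 := by
      rw [← huv]; exact dvd_add (Dvd.dvd.mul_left hpa u) (Dvd.dvd.mul_left hpb v)
    have := Int.le_of_dvd one_pos this
    have hp1 : p ≤ 1 := by exact_mod_cast this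
    omega
  · exact hne h0

theorem stmt_8 (a b : ℤ) (hab : IsCoprime a b) :
    ¬ (2 : ℤ) ∣ a ^ 3 + 5 * a ^ 2 * b - 8 * a * b ^ 2 + b ^ 3 ∧
    ¬ (3 : ℤ) ∣ a ^ 3 + 5 * a ^ 2 * b - 8 * a * b ^ 2 + b ^ 3 ∧
    ¬ (5 : ℤ) ∣ a ^ 3 + 5 * a ^ 2 * b - 8 * a * b ^ 2 + b ^ 3 ∧
    ¬ (11 : ℤ) ∣ a ^ 3 + 5 * a ^ 2 * b - 8 * a * b ^ 2 + b ^ 3 := by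
  refine ⟨?_, ?_, ?_, ?_⟩
  · exact_mod_cast keylem 2 (by norm_num) (by decide) a b hab
  · exact_mod_cast keylem 3 (by norm_num) (by decide) a b hab
  · exact_mod_cast keylem 5 (by norm_num) (by decide) a b hab
  · exact_mod_cast keylem 11 (by norm_num) (by decide) a b hab
end

section
/- Let a and b be nonzero coprime integers and let p be a prime dividing a·b. Then the p-adic valuation of the discriminant Δ of E_{C5}(a,b) equals 5 times the p-adic valuation of a·b. -/
theorem stmt_13 (a b : ℤ) (ha : a ≠ 0) (hb : b ≠ 0) (hab : IsCoprime a b)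
    (p : ℕ) (hp : p.Prime) (hdvd : (p : ℤ) ∣ a * b) :
    padicValInt p (EC5 a b).Δ = 5 * padicValInt p (a * b) := by
  haveI := Fact.mk hp
  have hΔ : (EC5 a b).Δ = -((a*b)^5*(a^2+11*a*b-b^2)) := by
    simp [EC5, WeierstrassCurve.Δ, WeierstrassCurve.b₂, WeierstrassCurve.b₄,
      WeierstrassCurve.b₆, WeierstrassCurve.b₈]
    ring
  have hpI : Prime (p : ℤ) := Nat.prime_iff_prime_int.mp hp
  have hc : ¬ (p : ℤ) ∣ (a^2+11*a*b-b^2) := by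
    intro hd
    rcases hpI.dvd_mul.mp hdvd with h | h
    · have hb2 : (p : ℤ) ∣ b^2 := by
        have h2 : b^2 = a*(a+11*b) - (a^2+11*a*b-b^2) := by ring
        rw [h2]; exact dvd_sub (h.mul_right _) hd
      exact hpI.not_unit (hab.isUnit_of_dvd' h (hpI.dvd_of_dvd_pow hb2))
    · have ha2 : (p : ℤ) ∣ a^2 := by
        have h2 : a^2 = (a^2+11*a*b-b^2) - b*(11*a-b) := by ring
        rw [h2]; exact dvd_sub hd (h.mul_right _)
      exact hpI.not_unit (hab.isUnit_of_dvd' (hpI.dvd_of_dvd_pow ha2) h)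
  have hab0 : a * b ≠ 0 := mul_ne_zero ha hb
  have hc0 : (a^2+11*a*b-b^2) ≠ 0 := fun h0 => hc (h0 ▸ dvd_zero _)
  rw [hΔ]
  rw [show padicValInt p (-((a*b)^5*(a^2+11*a*b-b^2))) = padicValInt p ((a*b)^5*(a^2+11*a*b-b^2)) by
    simp [padicValInt, Int.natAbs_neg]]
  rw [padicValInt.mul (pow_ne_zero 5 hab0) hc0, padicValInt.eq_zero_of_not_dvd hc, add_zero]
  simp only [padicValInt, Int.natAbs_pow]
  rw [padicValNat.pow _ 5]
end

section
/- Let a and b be coprime integers and let p ≥ 7 be a prime dividing a² + 11ab − b². Then c₄·c₆ ≡ 5a⁴b⁴(a² + b²) (mod p), where c₄ and c₆ are the invariants of E_{C5}(a,b). Consequently −c₄c₆ ≡ −5a⁴b⁴(a² + b²) (mod p). -/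
theorem stmt_14 (a b : ℤ) (hab : IsCoprime a b) (p : ℕ) (hp : p.Prime) (hp7 : 7 ≤ p)
    (hdvd : (p : ℤ) ∣ a ^ 2 + 11 * a * b - b ^ 2) :
    Int.ModEq (p : ℤ) ((EC5 a b).c₄ * (EC5 a b).c₆)
      (5 * a ^ 4 * b ^ 4 * (a ^ 2 + b ^ 2)) ∧
    Int.ModEq (p : ℤ) (-((EC5 a b).c₄ * (EC5 a b).c₆))
      (-(5 * a ^ 4 * b ^ 4 * (a ^ 2 + b ^ 2))) := by
  have h : Int.ModEq (p : ℤ) ((EC5 a b).c₄ * (EC5 a b).c₆)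
      (5 * a ^ 4 * b ^ 4 * (a ^ 2 + b ^ 2)) := by
    rw [Int.modEq_iff_dvd]
    have := hdvd.mul_right (a ^ 8 + 19 * a ^ 7 * b + 97 * a ^ 6 * b ^ 2 + 92 * a ^ 5 * b ^ 3
      + 92 * a ^ 3 * b ^ 5 - 97 * a ^ 2 * b ^ 6 + 19 * a * b ^ 7 - b ^ 8)
    convert this using 1
    · rfl
    simp only [EC5, WeierstrassCurve.c₄, WeierstrassCurve.c₆, WeierstrassCurve.b₂,
      WeierstrassCurve.b₄, WeierstrassCurve.b₆]
    ring
  exact ⟨h, h.neg⟩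
end

section
/- Let a and b be coprime integers and let p ≥ 13 be a prime dividing a³ + 5a²b − 8ab² + b³. Then c₄·c₆ ≡ 7a⁶b⁶(a−b)⁶(a² − ab + b²) (mod p), where c₄ and c₆ are the invariants of E_{C7}(a,b). Consequently −c₄c₆ ≡ −7a⁶b⁶(a−b)⁶(a² − ab + b²) (mod p). -/
theorem stmt_15 (a b : ℤ) (hab : IsCoprime a b) (p : ℕ) (hp : p.Prime) (hp13 : 13 ≤ p)
    (hdvd : (p : ℤ) ∣ a ^ 3 + 5 * a ^ 2 * b - 8 * a * b ^ 2 + b ^ 3) :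
    Int.ModEq (p : ℤ) ((EC7 a b).c₄ * (EC7 a b).c₆)
      (7 * a ^ 6 * b ^ 6 * (a - b) ^ 6 * (a ^ 2 - a * b + b ^ 2)) ∧
    Int.ModEq (p : ℤ) (-((EC7 a b).c₄ * (EC7 a b).c₆))
      (-(7 * a ^ 6 * b ^ 6 * (a - b) ^ 6 * (a ^ 2 - a * b + b ^ 2))) := by
  have h : Int.ModEq (p : ℤ) ((EC7 a b).c₄ * (EC7 a b).c₆)
      (7 * a ^ 6 * b ^ 6 * (a - b) ^ 6 * (a ^ 2 - a * b + b ^ 2)) := by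
    rw [Int.modEq_iff_dvd]
    have h2 : 7 * a ^ 6 * b ^ 6 * (a - b) ^ 6 * (a ^ 2 - a * b + b ^ 2)
        - (EC7 a b).c₄ * (EC7 a b).c₆
        = (a ^ 3 + 5 * a ^ 2 * b - 8 * a * b ^ 2 + b ^ 3) *
          (-((-1)*b^17 + 22*a*b^16 + (-194)*a^2*b^15 + 909*a^3*b^14 + (-2555)*a^4*b^13
            + 4585*a^5*b^12 + (-5411)*a^6*b^11 + 4355*a^7*b^10 + (-2605)*a^8*b^9
            + 1433*a^9*b^8 + (-769)*a^10*b^7 + 105*a^11*b^6 + 329*a^12*b^5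
            + (-259)*a^13*b^4 + 41*a^14*b^3 + 22*a^15*b^2 + (-5)*a^16*b + (-1)*a^17)) := by
      simp only [EC7, WeierstrassCurve.c₄, WeierstrassCurve.c₆, WeierstrassCurve.b₂,
        WeierstrassCurve.b₄, WeierstrassCurve.b₆]
      ring
    rw [h2]
    exact hdvd.mul_right _
  exact ⟨h, h.neg⟩
end

section
/- Let a and b be coprime integers and let p ≥ 7 be a prime dividing a² − ab + b². Then c₄·c₆ ≡ −243·a·b²⁹ (mod p), where c₄ and c₆ are the invariants of E_{C9}(a,b). Consequently −c₄c₆ ≡ 243·a·b²⁹ (mod p). -/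
/-- The parameterized Weierstrass curve `E_{C9}(a,b)`. -/
def EC9 (a b : ℤ) : WeierstrassCurve ℤ :=
  ⟨a ^ 3 + a * b ^ 2 - b ^ 3,
    a ^ 4 * b ^ 2 - 2 * a ^ 3 * b ^ 3 + 2 * a ^ 2 * b ^ 4 - a * b ^ 5,
    a ^ 3 * (a ^ 4 * b ^ 2 - 2 * a ^ 3 * b ^ 3 + 2 * a ^ 2 * b ^ 4 - a * b ^ 5), 0, 0⟩

theorem stmt_16 (a b : ℤ) (hab : IsCoprime a b) (p : ℕ) (hp : p.Prime) (hp7 : 7 ≤ p)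
    (hdvd : (p : ℤ) ∣ a ^ 2 - a * b + b ^ 2) :
    Int.ModEq (p : ℤ) ((EC9 a b).c₄ * (EC9 a b).c₆) (-(243 * a * b ^ 29)) ∧
    Int.ModEq (p : ℤ) (-((EC9 a b).c₄ * (EC9 a b).c₆)) (243 * a * b ^ 29) := by
  have key : (p : ℤ) ∣ (-(243 * a * b ^ 29)) - (EC9 a b).c₄ * (EC9 a b).c₆ :=
    hdvd.trans ⟨(1 * a ^ 28 + 1 * a ^ 27 * b - 30 * a ^ 26 * b ^ 2 + 39 * a ^ 25 * b ^ 3 +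
      294 * a ^ 24 * b ^ 4 - 1095 * a ^ 23 * b ^ 5 + 636 * a ^ 22 * b ^ 6 +
      4791 * a ^ 21 * b ^ 7 - 15735 * a ^ 20 * b ^ 8 + 23418 * a ^ 19 * b ^ 9 -
      14199 * a ^ 18 * b ^ 10 - 15945 * a ^ 17 * b ^ 11 + 58650 * a ^ 16 * b ^ 12 -
      113469 * a ^ 15 * b ^ 13 + 204639 * a ^ 14 * b ^ 14 - 363012 * a ^ 13 * b ^ 15 +
      582216 * a ^ 12 * b ^ 16 - 790368 * a ^ 11 * b ^ 17 + 880260 * a ^ 10 * b ^ 18 -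
      794094 * a ^ 9 * b ^ 19 + 577653 * a ^ 8 * b ^ 20 - 337047 * a ^ 7 * b ^ 21 +
      155265 * a ^ 6 * b ^ 22 - 55248 * a ^ 5 * b ^ 23 + 15162 * a ^ 4 * b ^ 24 -
      2886 * a ^ 3 * b ^ 25 + 132 * a ^ 2 * b ^ 26 - 272 * a * b ^ 27 + 1 * b ^ 28), by
      simp only [EC9, WeierstrassCurve.c₄, WeierstrassCurve.c₆, WeierstrassCurve.b₂,
        WeierstrassCurve.b₄, WeierstrassCurve.b₆]
      ring⟩
  have h1 : Int.ModEq (p : ℤ) ((EC9 a b).c₄ * (EC9 a b).c₆) (-(243 * a * b ^ 29)) :=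
    Int.modEq_iff_dvd.mpr (by simpa using key)
  exact ⟨h1, by simpa using h1.neg⟩
end

section
/- Let a and b be coprime integers and let p ≥ 7 be a prime dividing a³ + 3a²b − 6ab² + b³. Then c₄·c₆ ≡ 243·(ab(a−b))¹⁰ (mod p), where c₄ and c₆ are the invariants of E_{C9}(a,b). Consequently −c₄c₆ ≡ −243·(ab(a−b))¹⁰ (mod p). -/
theorem stmt_17 (a b : ℤ) (hab : IsCoprime a b) (p : ℕ) (hp : p.Prime) (hp7 : 7 ≤ p)
    (hdvd : (p : ℤ) ∣ a ^ 3 + 3 * a ^ 2 * b - 6 * a * b ^ 2 + b ^ 3) :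
    Int.ModEq (p : ℤ) ((EC9 a b).c₄ * (EC9 a b).c₆) (243 * (a * b * (a - b)) ^ 10) ∧
    Int.ModEq (p : ℤ) (-((EC9 a b).c₄ * (EC9 a b).c₆))
      (-(243 * (a * b * (a - b)) ^ 10)) := by
  have key : 243 * (a * b * (a - b)) ^ 10 - (EC9 a b).c₄ * (EC9 a b).c₆ =
      (a ^ 3 + 3 * a ^ 2 * b - 6 * a * b ^ 2 + b ^ 3) *
      (-((-1) * a ^ 27 * b ^ 0 + (3) * a ^ 26 * b ^ 1 + (15) * a ^ 25 * b ^ 2 + (-96) * a ^ 24 * b ^ 3 + (150) * a ^ 23 * b ^ 4 + (309) * a ^ 22 * b ^ 5 + (-1956) * a ^ 21 * b ^ 6 + (4512) * a ^ 20 * b ^ 7 + (-5691) * a ^ 19 * b ^ 8 + (2157) * a ^ 18 * b ^ 9 + (7980) * a ^ 17 * b ^ 10 + (-24549) * a ^ 16 * b ^ 11 + (48039) * a ^ 15 * b ^ 12 + (-82167) * a ^ 14 * b ^ 13 + (131496) * a ^ 13 * b ^ 14 + (-193173) * a ^ 12 * b ^ 15 + (249765) * a ^ 11 * b ^ 16 +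 (-275073) * a ^ 10 * b ^ 17 + (253203) * a ^ 9 * b ^ 18 + (-192660) * a ^ 8 * b ^ 19 + (120021) * a ^ 7 * b ^ 20 + (-60432) * a ^ 6 * b ^ 21 + (24117) * a ^ 5 * b ^ 22 + (-7404) * a ^ 4 * b ^ 23 + (1671) * a ^ 3 * b ^ 24 + (-258) * a ^ 2 * b ^ 25 + (24) * a ^ 1 * b ^ 26 + (-1) * a ^ 0 * b ^ 27)) := by
    simp only [EC9, WeierstrassCurve.c₄, WeierstrassCurve.c₆, WeierstrassCurve.b₂,
      WeierstrassCurve.b₄, WeierstrassCurve.b₆]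
    ring
  have h1 : Int.ModEq (p : ℤ) ((EC9 a b).c₄ * (EC9 a b).c₆) (243 * (a * b * (a - b)) ^ 10) :=
    Int.modEq_iff_dvd.mpr (key ▸ hdvd.mul_right _)
  exact ⟨h1, h1.neg⟩
end

section
/- Let a and b be coprime integers and let p ≥ 5 be a prime dividing a. Then c₄·c₆ ≡ 2¹⁰·3⁵·b⁴⁰ (mod p), where c₄ and c₆ are the invariants of E_{C12}(a,b). Consequently −c₄c₆ ≡ −2¹⁰·3⁵·b⁴⁰ (mod p). -/
/-- The parameterized Weierstrass curve `E_{C12}(a,b)`. -/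
def EC12 (a b : ℤ) : WeierstrassCurve ℤ :=
  ⟨-(a ^ 4) + 2 * a ^ 3 * b + 2 * a ^ 2 * b ^ 2 - 8 * a * b ^ 3 + 6 * b ^ 4,
    b * (a - 2 * b) * (a - b) ^ 2 * (a ^ 2 - 3 * a * b + 3 * b ^ 2) *
      (a ^ 2 - 2 * a * b + 2 * b ^ 2),
    a * (b - a) ^ 3 *
      (b * (a - 2 * b) * (a - b) ^ 2 * (a ^ 2 - 3 * a * b + 3 * b ^ 2) *
        (a ^ 2 - 2 * a * b + 2 * b ^ 2)), 0, 0⟩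

theorem stmt_19 (a b : ℤ) (hab : IsCoprime a b) (p : ℕ) (hp : p.Prime) (hp5 : 5 ≤ p)
    (hdvd : (p : ℤ) ∣ a) :
    Int.ModEq (p : ℤ) ((EC12 a b).c₄ * (EC12 a b).c₆) (2 ^ 10 * 3 ^ 5 * b ^ 40) ∧
    Int.ModEq (p : ℤ) (-((EC12 a b).c₄ * (EC12 a b).c₆))
      (-(2 ^ 10 * 3 ^ 5 * b ^ 40)) := by
  have h : Int.ModEq (p : ℤ) ((EC12 a b).c₄ * (EC12 a b).c₆) (2 ^ 10 * 3 ^ 5 * b ^ 40) := by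
    have := Int.natCast_pos.mpr hp.pos
    rw [← ZMod.intCast_eq_intCast_iff]
    have ha : (a : ZMod p) = 0 := (ZMod.intCast_zmod_eq_zero_iff_dvd a p).mpr hdvd
    simp only [EC12, WeierstrassCurve.c₄, WeierstrassCurve.c₆, WeierstrassCurve.b₂,
      WeierstrassCurve.b₄, WeierstrassCurve.b₆]
    push_cast
    rw [ha]
    ring
  exact ⟨h, h.neg⟩
end
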